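/- Let X be a complex Banach space, U a bounded linear operator on X, κ ∈ ℂ, and r a real number with ‖U‖ < r < |κ|. Then U + κI is invertible in B(X) and (2πi)⁻¹ ∮_{|λ−κ|=r} λ⁻¹ (λI − (U + κI))⁻¹ dλ = (U + κI)⁻¹, where for each λ on the circle of center κ and radius r the operator λI − (U + κI) is invertible in B(X) and λ ≠ 0. -/

import Mathlib

/-!
For `A = U + κ I` and `R(z) = (z I - A)⁻¹`, the resolvent identity gives the partial fraction
decomposition `z⁻¹ R(z) = A⁻¹ R(z) - z⁻¹ A⁻¹` on the circle. Since `0` lies outside the circle,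
`∮ z⁻¹ dz = 0`. On the other hand `∮ R(z) dz = 2πi I`: after the substitution `z = κ + 1/w`
this integral is `2πi` times the average of the holomorphic function `w ↦ (I - w U)⁻¹` over the
circle `|w| = 1/r`, which by the mean value property is its value `I` at the centre.
-/

open Complex Metric Set Real

section Algebra

variable {𝕜 A : Type*} [Field 𝕜] [Ring A] [Algebra 𝕜 A]

theorem Ring.inverse_smul_of_ne_zero {k : 𝕜} (hk : k ≠ 0) (x : A) :
    Ring.inverse (k • x) = k⁻¹ • Ring.inverse x := by
  by_cases hx : IsUnit x
  · have := Ring.inverse_unit (Units.mk0 k hk • hx.unit)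
    simpa [Units.smul_def, Ring.inverse_of_isUnit hx] using this
  · have : ¬IsUnit (k • x) := by
      simpa [Units.smul_def] using (isUnit_smul_iff (Units.mk0 k hk) x).not.mpr hx
    rw [Ring.inverse_non_unit _ hx, Ring.inverse_non_unit _ this, smul_zero]

theorem smul_one_sub_eq_smul_one_sub_inv_smul {k : 𝕜} (hk : k ≠ 0) (a : A) :
    k • (1 : A) - a = k • (1 - k⁻¹ • a) := by
  rw [smul_sub, smul_inv_smul₀ hk]

theorem inv_smul_inverse_smul_one_sub {a : A} {k : 𝕜} (hk : k ≠ 0) (ha : IsUnit a)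
    (hka : IsUnit (k • (1 : A) - a)) :
    k⁻¹ • Ring.inverse (k • (1 : A) - a) =
      Ring.inverse a * Ring.inverse (k • (1 : A) - a) - k⁻¹ • Ring.inverse a := by
  set b := k • (1 : A) - a
  have hresolvent : k • (Ring.inverse a * Ring.inverse b) = Ring.inverse a + Ring.inverse b :=
    calc k • (Ring.inverse a * Ring.inverse b) = Ring.inverse a * (b + a) * Ring.inverse b := by
          rw [sub_add_cancel, mul_smul_one, smul_mul_assoc]
      _ = Ring.inverse a + Ring.inverse b := by
          rw [mul_add, add_mul, Ring.mul_inverse_cancel_right _ _ hka, Ring.inverse_mul_cancel _ ha,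
            one_mul]
  rw [← inv_smul_smul₀ hk (Ring.inverse a * Ring.inverse b), hresolvent, smul_add,
    add_sub_cancel_left]

end Algebra

theorem isUnit_smul_one_sub_of_norm_lt {𝕜 A : Type*} [NormedField 𝕜] [NormedRing A]
    [NormedAlgebra 𝕜 A] [CompleteSpace A] {a : A} {k : 𝕜} (h : ‖a‖ < ‖k‖) :
    IsUnit (k • (1 : A) - a) := by
  have hk : k ≠ 0 := norm_pos_iff.mp ((norm_nonneg a).trans_lt h)
  have hsmall : ‖k⁻¹ • a‖ < 1 := by
    rwa [norm_smul, norm_inv, inv_mul_lt_iff₀ (norm_pos_iff.mpr hk), mul_one]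
  rw [smul_one_sub_eq_smul_one_sub_inv_smul hk]
  simpa [Units.smul_def] using
    (isUnit_smul_iff (Units.mk0 k hk) _).mpr (Units.oneSub _ hsmall).isUnit

theorem Real.circleAverage_comp_inv {E : Type*} [NormedAddCommGroup E] [NormedSpace ℝ E]
    (f : ℂ → E) (R : ℝ) :
    circleAverage (fun z => f z⁻¹) 0 R = circleAverage f 0 R⁻¹ := by
  have hper : Function.Periodic (fun θ => f (circleMap 0 R⁻¹ θ)) (2 * π) :=
    fun θ => by simp [periodic_circleMap 0 R⁻¹ θ]
  simp only [circleAverage_def, circleMap_zero_inv]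
  rw [intervalIntegral.integral_comp_neg (fun θ => f (circleMap 0 R⁻¹ θ))]
  simpa using congrArg ((2 * π)⁻¹ • ·) (hper.intervalIntegral_add_eq (-(2 * π)) 0)

theorem circleIntegral_inv_eq_zero {c : ℂ} {R : ℝ} (hR : 0 ≤ R) (h : R < ‖c‖) :
    (∮ z in C(c, R), z⁻¹) = 0 := by
  refine DiffContOnCl.circleIntegral_eq_zero hR (differentiableOn_inv.diffContOnCl_ball ?_)
  rintro z hz rfl
  rw [mem_closedBall, dist_zero_left] at hz
  exact hz.not_gt h

section BanachAlgebra

variable {A : Type*} [NormedRing A] [NormedAlgebra ℂ A] [CompleteSpace A]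

theorem circleIntegral.integral_const_mul_of_circleIntegrable (a : A) {f : ℂ → A} {c : ℂ}
    {R : ℝ} (hf : CircleIntegrable f c R) :
    (∮ z in C(c, R), a * f z) = a * ∮ z in C(c, R), f z := by
  simp only [circleIntegral, ← mul_smul_comm]
  exact (ContinuousLinearMap.mul ℂ A a).intervalIntegral_comp_comm hf.out

theorem continuousOn_inverse_smul_one_sub {a : A} {s : Set ℂ}
    (h : ∀ z ∈ s, IsUnit (z • (1 : A) - a)) :
    ContinuousOn (fun z : ℂ => Ring.inverse (z • (1 : A) - a)) s := fun z hz =>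
  ((((differentiableAt_id (𝕜 := ℂ)).smul_const (1 : A)).sub_const a).inverse
    (h z hz)).continuousAt.continuousWithinAt

theorem circleAverage_inverse_one_sub_inv_smul {a : A} {R : ℝ} (h : ‖a‖ < R) :
    circleAverage (fun z => Ring.inverse (1 - z⁻¹ • a)) 0 R = 1 := by
  have hR : 0 < R := (norm_nonneg a).trans_lt h
  have hunit : ∀ w ∈ closedBall (0 : ℂ) |R⁻¹|, IsUnit (1 - w • a) := by
    intro w hw
    rw [mem_closedBall_zero_iff, abs_of_pos (inv_pos.mpr hR)] at hw
    refine (Units.oneSub _ ?_).isUnit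
    calc ‖w • a‖ ≤ ‖w‖ * ‖a‖ := norm_smul_le w a
      _ ≤ R⁻¹ * ‖a‖ := by gcongr
      _ < R⁻¹ * R := by gcongr
      _ = 1 := inv_mul_cancel₀ hR.ne'
  have hholo : DiffContOnCl ℂ (fun w : ℂ => Ring.inverse (1 - w • a)) (ball 0 |R⁻¹|) :=
    DifferentiableOn.diffContOnCl_ball (fun w hw => ((differentiableAt_const _).sub
      (differentiableAt_id.smul_const a)).inverse (hunit w hw) |>.differentiableWithinAt) subset_rfl
  rw [circleAverage_comp_inv (fun w => Ring.inverse (1 - w • a)), hholo.circleAverage]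
  simp

theorem circleIntegral_inverse_smul_one_sub {a : A} {c : ℂ} {R : ℝ} (h : ‖a - c • 1‖ < R) :
    (∮ z in C(c, R), Ring.inverse (z • (1 : A) - a)) = (2 * π * I : ℂ) • 1 := by
  have hR : 0 < R := (norm_nonneg _).trans_lt h
  have hmean : circleAverage (fun z => (z - c) • Ring.inverse (z • (1 : A) - a)) c R = 1 := by
    refine .trans ?_ (circleAverage_inverse_one_sub_inv_smul h)
    rw [← circleAverage_map_add_const]
    refine circleAverage_congr_sphere fun w hw => ?_
    have hw0 : w ≠ 0 := ne_of_mem_sphere hw (abs_ne_zero.mpr hR.ne')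
    have : (w + c) • (1 : A) - a = w • 1 - (a - c • 1) := by rw [add_smul]; abel
    simp only [add_sub_cancel_right, this, smul_one_sub_eq_smul_one_sub_inv_smul hw0,
      Ring.inverse_smul_of_ne_zero hw0, smul_inv_smul₀ hw0]
  rw [circleAverage_eq_circleIntegral hR.ne', inv_smul_eq_iff₀ (by simp [pi_ne_zero])] at hmean
  rw [← hmean]
  refine circleIntegral.integral_congr hR.le fun z hz => ?_
  simp only [inv_smul_smul₀ (sub_ne_zero.mpr (ne_of_mem_sphere hz hR.ne'))]

end BanachAlgebra

/-- For `‖U‖ < r < |κ|`, the operator `U + κI` is invertible in `B(X)`; every `λ`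
on the circle of center `κ` and radius `r` is nonzero and makes `λI − (U + κI)` invertible; and
`(2πi)⁻¹ ∮_{|λ−κ|=r} λ⁻¹ (λI − (U + κI))⁻¹ dλ = (U + κI)⁻¹`. -/
theorem stmt_3 {X : Type*} [NormedAddCommGroup X] [NormedSpace ℂ X] [CompleteSpace X]
    (U : X →L[ℂ] X) (κ : ℂ) (r : ℝ) (hr : ‖U‖ < r) (hrκ : r < ‖κ‖) :
    IsUnit (U + κ • (1 : X →L[ℂ] X)) ∧
      (∀ z : ℂ, ‖z - κ‖ = r →
        z ≠ 0 ∧ IsUnit (z • (1 : X →L[ℂ] X) - (U + κ • (1 : X →L[ℂ] X)))) ∧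
      (2 * Real.pi * Complex.I : ℂ)⁻¹ •
          (∮ z in C(κ, r),
            z⁻¹ • Ring.inverse (z • (1 : X →L[ℂ] X) - (U + κ • (1 : X →L[ℂ] X)))) =
        Ring.inverse (U + κ • (1 : X →L[ℂ] X)) := by
  have hr0 : 0 < r := (norm_nonneg U).trans_lt hr
  set A := U + κ • (1 : X →L[ℂ] X) with hA_def
  have hA : IsUnit A := by
    simpa [A, sub_eq_add_neg, add_comm] using
      isUnit_smul_one_sub_of_norm_lt (a := -U) (k := κ) (by simpa using hr.trans hrκ)
  have hcirc : ∀ z : ℂ, ‖z - κ‖ = r → z ≠ 0 ∧ IsUnit (z • (1 : X →L[ℂ] X) - A) := by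
    intro z hz
    refine ⟨by rintro rfl; rw [zero_sub, norm_neg] at hz; exact hrκ.ne' hz, ?_⟩
    have : z • (1 : X →L[ℂ] X) - A = (z - κ) • 1 - U := by rw [hA_def, sub_smul]; abel
    exact this ▸ isUnit_smul_one_sub_of_norm_lt (hz ▸ hr)
  refine ⟨hA, hcirc, ?_⟩
  have hsphere : ∀ z ∈ sphere κ r, z ≠ 0 ∧ IsUnit (z • (1 : X →L[ℂ] X) - A) :=
    fun z hz => hcirc z (mem_sphere_iff_norm.mp hz)
  have hres := continuousOn_inverse_smul_one_sub fun z hz => (hsphere z hz).2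
  have hinv : ContinuousOn (fun z : ℂ => z⁻¹ • Ring.inverse A) (sphere κ r) :=
    (continuousOn_id.inv₀ fun z hz => (hsphere z hz).1).smul continuousOn_const
  rw [circleIntegral.integral_congr hr0.le fun z hz =>
      inv_smul_inverse_smul_one_sub (𝕜 := ℂ) (hsphere z hz).1 hA (hsphere z hz).2,
    circleIntegral.integral_sub ((continuousOn_const.fun_mul hres).circleIntegrable hr0.le)
      (hinv.circleIntegrable hr0.le),
    circleIntegral.integral_const_mul_of_circleIntegrable _ (hres.circleIntegrable hr0.le),
    circleIntegral.integral_smul_const, circleIntegral_inv_eq_zero hr0.le hrκ,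
    circleIntegral_inverse_smul_one_sub (by simpa [A] using hr), zero_smul, sub_zero,
    mul_smul_comm, mul_one, inv_smul_smul₀ (by simp [pi_ne_zero])]
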